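/- arXiv:2305.19410 — 3 statements merged into one kernel-verified Lean document; each statement's English description precedes it below -/
import Mathlib

section
/- Let N' be obtained from a network N by adding a single new reaction C -> D (not already in N). Then the change in deficiency delta(N') - delta(N) is either 0 or 1. -/
open Submodule

/-- A complex on `s` species: a vector of nonnegative integers. -/
abbrev Cplx (s : ℕ) := Fin s → ℕ

/-- The real vector associated to a complex. -/
def toR {s : ℕ} (C : Cplx s) : Fin s → ℝ := fun i => (C i : ℝ)

/-- A chemical reaction network on `s` species, given by its set of reactions
(ordered pairs of distinct complexes). -/
structure Network (s : ℕ) where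
  reactions : Finset (Cplx s × Cplx s)
  ne : ∀ r ∈ reactions, r.1 ≠ r.2

namespace Network

variable {s : ℕ}

/-- The complexes of a network: all sources and targets of reactions. -/
def complexes (N : Network s) : Finset (Cplx s) :=
  N.reactions.image Prod.fst ∪ N.reactions.image Prod.snd

/-- One (undirected) step in the reaction graph. -/
def step (N : Network s) (C D : Cplx s) : Prop :=
  (C, D) ∈ N.reactions ∨ (D, C) ∈ N.reactions

/-- Being connected by a path in the undirected reaction graph. -/
def linked (N : Network s) : Cplx s → Cplx s → Prop :=
  Relation.ReflTransGen N.step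

/-- `C` and `D` are complexes of `N` lying in a common linkage class. -/
def sameLinkageClass (N : Network s) (C D : Cplx s) : Prop :=
  C ∈ N.complexes ∧ D ∈ N.complexes ∧ N.linked C D

/-- The linkage class of a complex `C`. -/
def linkageClass (N : Network s) (C : Cplx s) : Set (Cplx s) :=
  {D | N.linked C D}

/-- The number of complexes `c_N`. -/
def numComplexes (N : Network s) : ℕ := N.complexes.card

/-- The number of linkage classes `ℓ_N`. -/
noncomputable def numLinkage (N : Network s) : ℕ :=
  Set.ncard {S : Set (Cplx s) | ∃ C ∈ N.complexes, S = N.linkageClass C}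

/-- The number of reactions `r_N`. -/
def numReactions (N : Network s) : ℕ := N.reactions.card

/-- The stoichiometric subspace: the real span of all reaction vectors. -/
def stoichSubspace (N : Network s) : Submodule ℝ (Fin s → ℝ) :=
  Submodule.span ℝ {v | ∃ r ∈ N.reactions, v = toR r.2 - toR r.1}

/-- The rank of the network. -/
noncomputable def rank (N : Network s) : ℕ :=
  Module.finrank ℝ N.stoichSubspace

/-- The deficiency `δ(N) = c_N - ℓ_N - rk(N)`. -/
noncomputable def deficiency (N : Network s) : ℤ :=
  (N.numComplexes : ℤ) - N.numLinkage - N.rank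

/-- The cyclomatic number `cyc(N) = r_N - c_N + ℓ_N`. -/
noncomputable def cyc (N : Network s) : ℤ :=
  (N.numReactions : ℤ) - N.numComplexes + N.numLinkage

end Network

/-!
`c_N - ℓ_N` is the number of edges of a spanning forest of the reaction graph. Counting a
complex that is new to `N` as a linkage class of its own, the reaction `C → D` raises it by one
if it joins two different linkage classes of `N`, and leaves it unchanged otherwise. The rank
grows by at most one, and not at all when `C` and `D` are already linked in `N`, because `D - C`
is then a signed sum of reaction vectors along a path. So `δ` grows by `0` or `1`.
-/

open scoped Finset

namespace Network

variable {s : ℕ}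

section Linkage

variable (N : Network s) {X Y : Cplx s}

lemma step_symm (hs : N.step X Y) : N.step Y X := Or.symm hs

lemma linked_symm (hl : N.linked X Y) : N.linked Y X :=
  Relation.ReflTransGen.mono (fun _ _ => N.step_symm) _ _ (Relation.reflTransGen_swap.mpr hl)

lemma mem_complexes_of_step (hs : N.step X Y) : Y ∈ N.complexes := by
  rcases hs with hXY | hYX
  · exact Finset.mem_union_right _ (Finset.mem_image_of_mem _ hXY)
  · exact Finset.mem_union_left _ (Finset.mem_image_of_mem _ hYX)

lemma eq_of_linked_of_notMem (hY : Y ∉ N.complexes) (hl : N.linked X Y) : X = Y := by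
  induction hl with
  | refl => rfl
  | tail _ hs _ => exact absurd (N.mem_complexes_of_step hs) hY

lemma linkageClass_eq_iff : N.linkageClass X = N.linkageClass Y ↔ N.linked X Y := by
  refine ⟨fun hXY => ?_, fun hl => Set.ext fun Z => ⟨(N.linked_symm hl).trans, hl.trans⟩⟩
  have hY : Y ∈ N.linkageClass Y := Relation.ReflTransGen.refl
  rwa [← hXY] at hY

lemma sub_mem_stoichSubspace_of_linked (hl : N.linked X Y) :
    toR Y - toR X ∈ N.stoichSubspace := by
  induction hl with
  | refl => simp
  | @tail Z W _ hs ih =>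
    have hZW : toR W - toR Z ∈ N.stoichSubspace := by
      rcases hs with hZW | hWZ
      · exact subset_span ⟨(Z, W), hZW, rfl⟩
      · have hWZ' : toR Z - toR W ∈ N.stoichSubspace := subset_span ⟨(W, Z), hWZ, rfl⟩
        simpa using neg_mem hWZ'
    simpa using add_mem ih hZW

lemma numLinkage_eq_ncard_image : N.numLinkage = (N.linkageClass '' N.complexes).ncard := by
  unfold numLinkage
  congr 1
  ext S
  simp only [Set.mem_ofPred_eq, Set.mem_image, Finset.mem_coe, eq_comm]

/-- Every `X ∈ V \ N.complexes` is its own linkage class, so `c_N - ℓ_N` may be computed on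
any vertex set `V` containing the complexes. -/
lemma numComplexes_sub_numLinkage_eq (V : Finset (Cplx s)) (hV : N.complexes ⊆ V) :
    (N.numComplexes : ℤ) - N.numLinkage = #V - (N.linkageClass '' V).ncard := by
  have hsplit : (V : Set (Cplx s)) = (N.complexes : Set (Cplx s)) ∪ ↑(V \ N.complexes) := by
    rw [← Finset.coe_union, Finset.union_sdiff_of_subset hV]
  have hdisj :
      Disjoint (N.linkageClass '' N.complexes) (N.linkageClass '' ↑(V \ N.complexes)) := by
    refine Set.disjoint_left.mpr ?_
    rintro _ ⟨X, hX, rfl⟩ ⟨Y, hY, hYX⟩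
    rw [Finset.coe_sdiff, Set.mem_sdiff] at hY
    have hXY := N.linkageClass_eq_iff.mp hYX.symm
    exact hY.2 (N.eq_of_linked_of_notMem hY.2 hXY ▸ hX)
  have hinj : Set.InjOn N.linkageClass ↑(V \ N.complexes) := by
    intro X _ Y hY hXY
    rw [Finset.coe_sdiff, Set.mem_sdiff] at hY
    exact N.eq_of_linked_of_notMem hY.2 (N.linkageClass_eq_iff.mp hXY)
  have hcard : (N.linkageClass '' V).ncard = N.numLinkage + #(V \ N.complexes) := by
    rw [hsplit, Set.image_union, Set.ncard_union_eq hdisj (Set.toFinite _) (Set.toFinite _),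
      hinj.ncard_image, Set.ncard_coe_finset, numLinkage_eq_ncard_image]
  have hV' : #(V \ N.complexes) + #N.complexes = #V := Finset.card_sdiff_add_card_eq_card hV
  unfold numComplexes
  omega

end Linkage

section InsertReaction

variable {N N' : Network s} {C D X Y : Cplx s}

lemma rank_mono (h : N.reactions ⊆ N'.reactions) : N.rank ≤ N'.rank :=
  Submodule.finrank_mono <| span_mono fun _ ⟨r, hr, hv⟩ => ⟨r, h hr, hv⟩

lemma complexes_mono (h : N.reactions ⊆ N'.reactions) :
    N.complexes ⊆ N'.complexes :=
  Finset.union_subset_union (Finset.image_subset_image h) (Finset.image_subset_image h)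

lemma step_insert_iff (h : N'.reactions = insert (C, D) N.reactions) :
    N'.step X Y ↔ N.step X Y ∨ (X = C ∧ Y = D) ∨ (X = D ∧ Y = C) := by
  simp only [step, h, Finset.mem_insert, Prod.mk.injEq]
  tauto

lemma linked_of_linked_insert (h : N'.reactions = insert (C, D) N.reactions)
    (hl : N.linked X Y) : N'.linked X Y :=
  Relation.ReflTransGen.mono (fun _ _ hs => (step_insert_iff h).mpr (Or.inl hs)) _ _ hl

lemma linked_insert (h : N'.reactions = insert (C, D) N.reactions) : N'.linked C D :=
  .single ((step_insert_iff h).mpr (Or.inr (Or.inl ⟨rfl, rfl⟩)))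

lemma linked_insert_iff (h : N'.reactions = insert (C, D) N.reactions) :
    N'.linked X Y ↔ N.linked X Y ∨
      ((N.linked X C ∨ N.linked X D) ∧ (N.linked Y C ∨ N.linked Y D)) := by
  constructor
  · intro hl
    induction hl with
    | refl => exact Or.inl .refl
    | @tail Z W _ hs ih =>
      rcases (step_insert_iff h).mp hs with hs | ⟨rfl, rfl⟩ | ⟨rfl, rfl⟩
      · have hWZ : N.linked W Z := .single (N.step_symm hs)
        rcases ih with hXZ | ⟨hX, hZC | hZD⟩
        · exact Or.inl (hXZ.tail hs)
        · exact Or.inr ⟨hX, Or.inl (hWZ.trans hZC)⟩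
        · exact Or.inr ⟨hX, Or.inr (hWZ.trans hZD)⟩
      · rcases ih with hXC | ⟨hX, -⟩
        · exact Or.inr ⟨Or.inl hXC, Or.inr .refl⟩
        · exact Or.inr ⟨hX, Or.inr .refl⟩
      · rcases ih with hXD | ⟨hX, -⟩
        · exact Or.inr ⟨Or.inr hXD, Or.inl .refl⟩
        · exact Or.inr ⟨hX, Or.inl .refl⟩
  · have hDC : N'.linked D C := N'.linked_symm (linked_insert h)
    have linked_C : ∀ {Z}, N.linked Z C ∨ N.linked Z D → N'.linked Z C := by
      rintro Z (hZC | hZD)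
      · exact linked_of_linked_insert h hZC
      · exact (linked_of_linked_insert h hZD).trans hDC
    rintro (hl | ⟨hX, hY⟩)
    · exact linked_of_linked_insert h hl
    · exact (linked_C hX).trans (N'.linked_symm (linked_C hY))

lemma linkageClass_insert_of_linked (h : N'.reactions = insert (C, D) N.reactions)
    (hCD : N.linked C D) : N'.linkageClass = N.linkageClass := by
  have hC : ∀ {Z}, N.linked Z C ∨ N.linked Z D → N.linked Z C := by
    rintro Z (hZC | hZD)
    · exact hZC
    · exact hZD.trans (N.linked_symm hCD)
  funext X
  ext Y
  change N'.linked X Y ↔ N.linked X Y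
  rw [linked_insert_iff h]
  refine ⟨?_, Or.inl⟩
  rintro (hl | ⟨hX, hY⟩)
  · exact hl
  · exact (hC hX).trans (N.linked_symm (hC hY))

lemma linked_of_linked_insert_of_not_linked (h : N'.reactions = insert (C, D) N.reactions)
    (hXD : ¬ N.linked X D) (hYD : ¬ N.linked Y D) (hl : N'.linked X Y) : N.linked X Y := by
  rcases (linked_insert_iff h).mp hl with hl | ⟨hX | hX, hY | hY⟩
  · exact hl
  · exact hX.trans (N.linked_symm hY)
  all_goals contradiction

def saturation (N : Network s) (S : Set (Cplx s)) : Set (Cplx s) :=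
  {Y | ∃ X ∈ S, N.linked X Y}

lemma saturation_linkageClass (h : N'.reactions = insert (C, D) N.reactions) (X : Cplx s) :
    N'.saturation (N.linkageClass X) = N'.linkageClass X := by
  ext Y
  exact ⟨fun ⟨Z, hXZ, hZY⟩ => (linked_of_linked_insert h hXZ).trans hZY,
    fun hXY => ⟨X, .refl, hXY⟩⟩

lemma ncard_linkageClass_image_insert_of_not_linked
    (h : N'.reactions = insert (C, D) N.reactions) {V : Set (Cplx s)} (hV : V.Finite)
    (hC : C ∈ V) (hD : D ∈ V) (hCD : ¬ N.linked C D) :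
    (N'.linkageClass '' V).ncard + 1 = (N.linkageClass '' V).ncard := by
  set K := N.linkageClass '' V
  have hDK : N.linkageClass D ∈ K := ⟨D, hD, rfl⟩
  have hCK : N.linkageClass C ∈ K \ {N.linkageClass D} :=
    ⟨⟨C, hC, rfl⟩, fun hCD' => hCD (N.linkageClass_eq_iff.mp hCD')⟩
  have himage : N'.linkageClass '' V = N'.saturation '' (K \ {N.linkageClass D}) := by
    have hmerge : N'.saturation (N.linkageClass D) = N'.saturation (N.linkageClass C) := by
      rw [saturation_linkageClass h, saturation_linkageClass h,
        N'.linkageClass_eq_iff.mpr (N'.linked_symm (linked_insert h))]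
    calc N'.linkageClass '' V = N'.saturation '' K := by
          rw [Set.image_image]
          exact Set.image_congr fun X _ => (saturation_linkageClass h X).symm
      _ = N'.saturation '' insert (N.linkageClass D) (K \ {N.linkageClass D}) := by
          rw [Set.insert_sdiff_singleton, Set.insert_eq_self.mpr hDK]
      _ = N'.saturation '' (K \ {N.linkageClass D}) := by
          rw [Set.image_insert_eq, hmerge]
          exact Set.insert_eq_self.mpr ⟨_, hCK, rfl⟩
  have hinj : Set.InjOn N'.saturation (K \ {N.linkageClass D}) := by
    rintro _ ⟨⟨X, -, rfl⟩, hX⟩ _ ⟨⟨Y, -, rfl⟩, hY⟩ hXY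
    rw [saturation_linkageClass h, saturation_linkageClass h, N'.linkageClass_eq_iff] at hXY
    rw [Set.mem_singleton_iff, N.linkageClass_eq_iff] at hX hY
    exact N.linkageClass_eq_iff.mpr (linked_of_linked_insert_of_not_linked h hX hY hXY)
  rw [himage, hinj.ncard_image, Set.ncard_sdiff_singleton_add_one hDK (hV.image _)]

lemma stoichSubspace_insert (h : N'.reactions = insert (C, D) N.reactions) :
    N'.stoichSubspace = span ℝ {toR D - toR C} ⊔ N.stoichSubspace := by
  rw [stoichSubspace, stoichSubspace, h, ← span_insert]
  congr 1
  ext v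
  simp [eq_comm (a := v)]

lemma rank_insert_le (h : N'.reactions = insert (C, D) N.reactions) :
    N'.rank ≤ N.rank + 1 := by
  have hline : Module.finrank ℝ (span ℝ {toR D - toR C}) ≤ 1 := by
    simpa using finrank_span_le_card ({toR D - toR C} : Set (Fin s → ℝ))
  rw [rank, rank, stoichSubspace_insert h]
  linarith [Submodule.finrank_add_le_finrank_add_finrank
    (span ℝ {toR D - toR C}) N.stoichSubspace]

lemma rank_insert_of_linked (h : N'.reactions = insert (C, D) N.reactions)
    (hCD : N.linked C D) : N'.rank = N.rank := by
  rw [rank, rank, stoichSubspace_insert h, sup_eq_right.mpr]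
  exact (span_singleton_le_iff_mem _ _).mpr (N.sub_mem_stoichSubspace_of_linked hCD)

end InsertReaction

end Network

theorem stmt2_general {s : ℕ} (N N' : Network s) (C D : Cplx s)
    (h : N'.reactions = insert (C, D) N.reactions) :
    N'.deficiency - N.deficiency = 0 ∨ N'.deficiency - N.deficiency = 1 := by
  have hsub : N.reactions ⊆ N'.reactions := h ▸ Finset.subset_insert _ _
  have hCD : (C, D) ∈ N'.reactions := h ▸ Finset.mem_insert_self _ _
  have hC : C ∈ N'.complexes := N'.mem_complexes_of_step (X := D) (Or.inr hCD)
  have hD : D ∈ N'.complexes := N'.mem_complexes_of_step (X := C) (Or.inl hCD)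
  have hN := N.numComplexes_sub_numLinkage_eq N'.complexes (Network.complexes_mono hsub)
  have hN' := N'.numComplexes_sub_numLinkage_eq N'.complexes subset_rfl
  have hrank_ge := Network.rank_mono hsub
  have hrank_le := Network.rank_insert_le h
  unfold Network.deficiency
  by_cases hlinked : N.linked C D
  · rw [Network.linkageClass_insert_of_linked h hlinked] at hN'
    have hrank := Network.rank_insert_of_linked h hlinked
    omega
  · have hmerge := Network.ncard_linkageClass_image_insert_of_not_linked h
      N'.complexes.finite_toSet hC hD hlinked
    omega

theorem stmt2 {s : ℕ} (N N' : Network s) (C D : Cplx s)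
    (hnew : (C, D) ∉ N.reactions)
    (h : N'.reactions = insert (C, D) N.reactions) :
    N'.deficiency - N.deficiency = 0 ∨ N'.deficiency - N.deficiency = 1 :=
  stmt2_general N N' C D h
end

section
/- Let N' be obtained from a network N with species X_1,...,X_s by the E2 operation: adding all inflow-outflow reactions 0 <-> X_i for every species X_i. Then delta(N') - delta(N) = rk(N) - s_N + m_N + tilde_ell_N - 1, where m_N is the number of at-most-unimolecular complexes (0 or X_i) that are not complexes of N, and tilde_ell_N is the number of linkage classes of N containing at least one at-most-unimolecular complex. Moreover delta(N') - delta(N) >= 0. -/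
open Submodule

/-- The at-most-unimolecular complexes: `0` and the single species `X_i`. -/
def uniComplexes (s : ℕ) : Finset (Cplx s) :=
  insert 0 (Finset.univ.image fun i : Fin s => Pi.single i 1)

/-! After adding the reactions `0 ⇌ Xᵢ` every standard basis vector is a reaction vector, so
`rk N' = s`; the complexes of `N'` are those of `N` together with the missing unimolecular ones;
and the linkage classes of `N` that contain a unimolecular complex fuse, with the new complexes,
into the single class of `0`, while the other classes are untouched. This gives the formula.

For nonnegativity, map the unimolecular complexes to `ℝˢ / S_N`. Their images span this space of
dimension `s - rk N` and include `0`, so there are at least `s - rk N + 1` of them. Complexes in a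
common linkage class differ by an element of `S_N`, so there are at most `m_N + ℓ̃_N` of them. -/

theorem Finset.card_image_le_card_image_of_eq_imp_eq {α β γ : Type*} [DecidableEq β]
    [DecidableEq γ] {f : α → β} {g : α → γ} {A : Finset α}
    (h : ∀ a ∈ A, ∀ b ∈ A, g a = g b → f a = f b) : (A.image f).card ≤ (A.image g).card := by
  obtain rfl | ⟨a₀, -⟩ := A.eq_empty_or_nonempty
  · simp
  have : Nonempty α := ⟨a₀⟩
  refine Finset.card_le_card_of_surjOn (f ∘ Function.invFunOn g A) ?_
  intro y hy
  obtain ⟨a, ha, rfl⟩ := Finset.mem_image.1 hy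
  have hex : ∃ b ∈ A, g b = g a := ⟨a, ha, rfl⟩
  exact ⟨g a, Finset.mem_image_of_mem g ha,
    h _ (Function.invFunOn_mem hex) a ha (Function.invFunOn_eq hex)⟩

theorem Module.finrank_lt_card_of_zero_mem {K V : Type*} [DivisionRing K] [AddCommGroup V]
    [Module K V] {S : Finset V} (h0 : 0 ∈ S) (hS : Submodule.span K (S : Set V) = ⊤) :
    Module.finrank K V < S.card := by
  classical
  have hspan : Submodule.span K ((S.erase 0 : Finset V) : Set V) = ⊤ := by
    rw [← hS, ← Submodule.span_insert_zero, Finset.coe_erase, Set.insert_sdiff_singleton,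
      Set.insert_eq_of_mem (Finset.mem_coe.2 h0)]
  have := finrank_span_finset_le_card (R := K) (S.erase 0)
  rw [Set.finrank, hspan, finrank_top, Finset.card_erase_of_mem h0] at this
  have := Finset.card_pos.2 ⟨0, h0⟩
  omega

theorem toR_zero {s : ℕ} : toR (0 : Cplx s) = 0 := by
  funext j; simp [toR]

theorem toR_single {s : ℕ} (i : Fin s) : toR (Pi.single i 1 : Cplx s) = Pi.single i 1 := by
  funext j
  by_cases hji : j = i
  · subst hji; simp [toR]
  · simp [toR, hji]

theorem span_range_toR_single (s : ℕ) :
    span ℝ (Set.range fun i : Fin s => toR (Pi.single i 1 : Cplx s)) = ⊤ := by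
  classical
  convert (Pi.basisFun ℝ (Fin s)).span_eq using 3
  funext i
  rw [toR_single, Pi.basisFun_apply]

theorem mem_uniComplexes {s : ℕ} {U : Cplx s} :
    U ∈ uniComplexes s ↔ U = 0 ∨ ∃ i, U = Pi.single i 1 := by
  simp [uniComplexes, eq_comm]

theorem zero_mem_uniComplexes (s : ℕ) : (0 : Cplx s) ∈ uniComplexes s :=
  mem_uniComplexes.2 (Or.inl rfl)

theorem single_mem_uniComplexes {s : ℕ} (i : Fin s) : (Pi.single i 1 : Cplx s) ∈ uniComplexes s :=
  mem_uniComplexes.2 (Or.inr ⟨i, rfl⟩)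

namespace Network

variable {s : ℕ} {N : Network s} {C D : Cplx s}

theorem linked_symm_s6 (h : N.linked C D) : N.linked D C :=
  Relation.ReflTransGen.mono (fun _ _ => Or.symm) _ _ (Relation.ReflTransGen.swap _ _ h)

theorem linkageClass_eq_of_linked (h : N.linked C D) : N.linkageClass C = N.linkageClass D := by
  ext E
  exact ⟨(linked_symm_s6 h).trans, h.trans⟩

theorem sub_mem_stoichSubspace_of_linked_s6 (h : N.linked C D) :
    toR D - toR C ∈ N.stoichSubspace := by
  induction h with
  | refl => simp
  | @tail E F _ hEF ih =>
    have hstep : toR F - toR E ∈ N.stoichSubspace := by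
      rcases hEF with hr | hr
      · exact subset_span ⟨(E, F), hr, rfl⟩
      · have hFE : toR E - toR F ∈ N.stoichSubspace := subset_span ⟨(F, E), hr, rfl⟩
        simpa using neg_mem hFE
    simpa using add_mem hstep ih

def linkageClasses (N : Network s) : Set (Set (Cplx s)) :=
  {S | ∃ C ∈ N.complexes, S = N.linkageClass C}

def uniLinkageClasses (N : Network s) : Set (Set (Cplx s)) :=
  {S ∈ N.linkageClasses | ∃ U ∈ uniComplexes s, U ∈ S}

def missingUniComplexes (N : Network s) : Finset (Cplx s) :=
  uniComplexes s \ N.complexes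

theorem linkageClasses_finite (N : Network s) : N.linkageClasses.Finite := by
  refine (N.complexes.finite_toSet.image N.linkageClass).subset ?_
  rintro _ ⟨C, hC, rfl⟩
  exact ⟨C, hC, rfl⟩

def withInflowOutflow (N : Network s) : Network s where
  reactions := N.reactions
    ∪ (Finset.univ.image fun i : Fin s => ((0 : Cplx s), Pi.single i 1))
    ∪ (Finset.univ.image fun i : Fin s => ((Pi.single i 1 : Cplx s), 0))
  ne r hr := by
    simp only [Finset.mem_union, Finset.mem_image, Finset.mem_univ, true_and] at hr
    rcases hr with (hr | ⟨i, rfl⟩) | ⟨i, rfl⟩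
    · exact N.ne r hr
    · exact (Pi.single_ne_zero_iff.2 one_ne_zero).symm
    · exact Pi.single_ne_zero_iff.2 one_ne_zero

theorem reactions_subset_withInflowOutflow : N.reactions ⊆ N.withInflowOutflow.reactions :=
  fun _ hr => Finset.mem_union_left _ (Finset.mem_union_left _ hr)

theorem linked_withInflowOutflow_of_linked (h : N.linked C D) :
    N.withInflowOutflow.linked C D :=
  Relation.ReflTransGen.mono (fun _ _ => Or.imp (reactions_subset_withInflowOutflow ·)
    (reactions_subset_withInflowOutflow ·)) _ _ h

theorem linked_withInflowOutflow_zero {U : Cplx s} (hU : U ∈ uniComplexes s) :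
    N.withInflowOutflow.linked 0 U := by
  rcases mem_uniComplexes.1 hU with rfl | ⟨i, rfl⟩
  · exact Relation.ReflTransGen.refl
  · exact Relation.ReflTransGen.single (Or.inl (by simp [withInflowOutflow]))

theorem step_withInflowOutflow (h : N.withInflowOutflow.step C D) :
    N.step C D ∨ (C ∈ uniComplexes s ∧ D ∈ uniComplexes s) := by
  simp only [step, withInflowOutflow, Finset.mem_union, Finset.mem_image, Finset.mem_univ,
    true_and, Prod.ext_iff] at h
  rcases h with ((h | ⟨i, rfl, rfl⟩) | ⟨i, rfl, rfl⟩) | ((h | ⟨i, rfl, rfl⟩) | ⟨i, rfl, rfl⟩) <;>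
    simp_all [step, zero_mem_uniComplexes, single_mem_uniComplexes]

theorem linkageClass_withInflowOutflow (hC : ∀ U ∈ uniComplexes s, ¬ N.linked C U) :
    N.withInflowOutflow.linkageClass C = N.linkageClass C := by
  ext D
  refine ⟨fun hD => ?_, linked_withInflowOutflow_of_linked⟩
  induction hD with
  | refl => exact Relation.ReflTransGen.refl
  | tail _ hstep ih =>
    rcases step_withInflowOutflow hstep with hst | ⟨hE, -⟩
    · exact ih.tail hst
    · exact absurd ih (hC _ hE)

theorem complexes_withInflowOutflow (hs : 0 < s) :
    N.withInflowOutflow.complexes = N.complexes ∪ uniComplexes s := by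
  ext C
  simp only [complexes, withInflowOutflow, uniComplexes, Finset.image_union, Finset.image_image,
    Finset.mem_union, Finset.mem_image, Finset.mem_insert, Finset.mem_univ, true_and,
    Function.comp_def]
  have : Nonempty (Fin s) := ⟨⟨0, hs⟩⟩
  aesop

theorem stoichSubspace_withInflowOutflow : N.withInflowOutflow.stoichSubspace = ⊤ := by
  rw [eq_top_iff, ← span_range_toR_single, span_le]
  rintro _ ⟨i, rfl⟩
  exact subset_span ⟨((0 : Cplx s), Pi.single i 1), by simp [withInflowOutflow], by simp [toR_zero]⟩

theorem rank_withInflowOutflow : N.withInflowOutflow.rank = s := by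
  rw [rank, stoichSubspace_withInflowOutflow, finrank_top, Module.finrank_fin_fun]

theorem linkageClasses_withInflowOutflow (hs : 0 < s) :
    N.withInflowOutflow.linkageClasses
      = insert (N.withInflowOutflow.linkageClass 0)
          (N.linkageClasses \ N.uniLinkageClasses) := by
  ext S
  simp only [linkageClasses, uniLinkageClasses, Set.mem_insert_iff, Set.mem_sdiff,
    Set.mem_ofPred_eq, complexes_withInflowOutflow hs, Finset.mem_union]
  constructor
  · rintro ⟨C, hC, rfl⟩
    by_cases hC0 : N.withInflowOutflow.linked C 0
    · exact Or.inl (linkageClass_eq_of_linked hC0)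
    have hno : ∀ U ∈ uniComplexes s, ¬ N.linked C U := fun U hU hCU =>
      hC0 ((linked_withInflowOutflow_of_linked hCU).trans
        (linked_symm_s6 (linked_withInflowOutflow_zero hU)))
    have hCN : C ∈ N.complexes := hC.resolve_right fun hU =>
      hC0 (linked_symm_s6 (linked_withInflowOutflow_zero hU))
    rw [linkageClass_withInflowOutflow hno]
    exact Or.inr ⟨⟨C, hCN, rfl⟩, fun ⟨_, U, hU, hCU⟩ => hno U hU hCU⟩
  · rintro (rfl | ⟨⟨C, hC, rfl⟩, hnot⟩)
    · exact ⟨0, Or.inr (zero_mem_uniComplexes s), rfl⟩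
    · have hno : ∀ U ∈ uniComplexes s, ¬ N.linked C U := fun U hU hCU =>
        hnot ⟨⟨C, hC, rfl⟩, U, hU, hCU⟩
      exact ⟨C, Or.inl hC, (linkageClass_withInflowOutflow hno).symm⟩

theorem numLinkage_withInflowOutflow_add (hs : 0 < s) :
    N.withInflowOutflow.numLinkage + N.uniLinkageClasses.ncard = N.numLinkage + 1 := by
  have hzero : N.withInflowOutflow.linkageClass 0 ∉ N.linkageClasses \ N.uniLinkageClasses :=
    fun ⟨hL, hnot⟩ => hnot ⟨hL, 0, zero_mem_uniComplexes s, Relation.ReflTransGen.refl⟩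
  have hsplit := Set.ncard_sdiff_add_ncard_of_subset (fun _ hS => hS.1 : N.uniLinkageClasses ⊆ _)
    N.linkageClasses_finite
  rw [numLinkage, ← linkageClasses, linkageClasses_withInflowOutflow hs,
    Set.ncard_insert_of_notMem hzero (N.linkageClasses_finite.sdiff), numLinkage,
    ← linkageClasses, ← hsplit]
  ring

theorem numComplexes_withInflowOutflow (hs : 0 < s) :
    N.withInflowOutflow.numComplexes = N.numComplexes + N.missingUniComplexes.card := by
  rw [numComplexes, numComplexes, complexes_withInflowOutflow hs, missingUniComplexes,
    ← Finset.card_union_of_disjoint Finset.disjoint_sdiff, Finset.union_sdiff_self_eq_union]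

theorem span_image_mkQ_uniComplexes (N : Network s) :
    span ℝ ((fun C => N.stoichSubspace.mkQ (toR C)) '' (uniComplexes s : Set (Cplx s))) = ⊤ := by
  have hspan : span ℝ (toR '' (uniComplexes s : Set (Cplx s))) = ⊤ := by
    rw [eq_top_iff, ← span_range_toR_single, span_le]
    rintro _ ⟨i, rfl⟩
    exact subset_span ⟨Pi.single i 1, single_mem_uniComplexes i, rfl⟩
  rw [← Set.image_image (g := N.stoichSubspace.mkQ), ← map_span, hspan,
    Submodule.map_top, range_mkQ]

theorem add_one_le_rank_add_card_missingUniComplexes_add_ncard (N : Network s) :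
    s + 1 ≤ N.rank + N.missingUniComplexes.card + N.uniLinkageClasses.ncard := by
  classical
  set P := N.stoichSubspace
  set f : Cplx s → (Fin s → ℝ) ⧸ P := fun C => P.mkQ (toR C) with hf
  have hdim : Module.finrank ℝ ((Fin s → ℝ) ⧸ P) < ((uniComplexes s).image f).card :=
    Module.finrank_lt_card_of_zero_mem
      (Finset.mem_image.2 ⟨0, zero_mem_uniComplexes s, by simp [hf, toR_zero]⟩)
      (by rw [Finset.coe_image]; exact N.span_image_mkQ_uniComplexes)
  have hquot : Module.finrank ℝ ((Fin s → ℝ) ⧸ P) + N.rank = s := by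
    rw [rank, Submodule.finrank_quotient_add_finrank, Module.finrank_fin_fun]
  have hsplit : ((uniComplexes s).image f).card
      ≤ ((uniComplexes s \ N.complexes).image f).card
        + ((uniComplexes s ∩ N.complexes).image f).card := by
    conv_lhs => rw [← Finset.sdiff_union_inter (uniComplexes s) N.complexes, Finset.image_union]
    exact Finset.card_union_le _ _
  have hmissing : ((uniComplexes s \ N.complexes).image f).card ≤ N.missingUniComplexes.card :=
    Finset.card_image_le
  have hclasses : ((uniComplexes s ∩ N.complexes).image f).card ≤ N.uniLinkageClasses.ncard := by
    calc ((uniComplexes s ∩ N.complexes).image f).card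
        ≤ ((uniComplexes s ∩ N.complexes).image N.linkageClass).card := by
          refine Finset.card_image_le_card_image_of_eq_imp_eq fun a _ b _ hab => ?_
          have hba : a ∈ N.linkageClass b := hab ▸ Relation.ReflTransGen.refl
          simp only [hf, mkQ_apply]
          exact (Submodule.Quotient.eq P).2 (sub_mem_stoichSubspace_of_linked_s6 hba)
      _ = (((uniComplexes s ∩ N.complexes).image N.linkageClass : Finset _) :
            Set (Set (Cplx s))).ncard := (Set.ncard_coe_finset _).symm
      _ ≤ N.uniLinkageClasses.ncard := by
          refine Set.ncard_le_ncard ?_ (N.linkageClasses_finite.subset fun _ hS => hS.1)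
          intro S hS
          obtain ⟨U, hU, rfl⟩ := Finset.mem_image.1 (Finset.mem_coe.1 hS)
          obtain ⟨hUuni, hUN⟩ := Finset.mem_inter.1 hU
          exact ⟨⟨U, hUN, rfl⟩, U, hUuni, Relation.ReflTransGen.refl⟩
  omega

end Network

theorem stmt6 {s : ℕ} (hs : 0 < s) (N N' : Network s)
    (h : N'.reactions = N.reactions
        ∪ (Finset.univ.image fun i : Fin s => ((0 : Cplx s), Pi.single i 1))
        ∪ (Finset.univ.image fun i : Fin s => ((Pi.single i 1 : Cplx s), 0))) :
    N'.deficiency - N.deficiency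
      = (N.rank : ℤ) - s + ((uniComplexes s \ N.complexes).card : ℤ)
        + (Set.ncard {S : Set (Cplx s) |
            (∃ C ∈ N.complexes, S = N.linkageClass C) ∧ ∃ U ∈ uniComplexes s, U ∈ S} : ℤ)
        - 1
    ∧ 0 ≤ N'.deficiency - N.deficiency := by
  obtain rfl : N' = N.withInflowOutflow := by
    cases N'
    subst h
    rfl
  have hc := N.numComplexes_withInflowOutflow hs
  have hl := N.numLinkage_withInflowOutflow_add hs
  have hr := N.rank_withInflowOutflow
  have hkey := N.add_one_le_rank_add_card_missingUniComplexes_add_ncard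
  change _ = _ - _ + (N.missingUniComplexes.card : ℤ) + (N.uniLinkageClasses.ncard : ℤ) - 1 ∧ _
  constructor <;>
  · simp only [Network.deficiency]
    omega
end

section
/- Let N' be obtained from a network N by an E5 operation: adding m new pairs of reversible reactions C(j) <-> D(j) (j = 1,...,m) involving m+i new species appearing only in the new reactions, such that the submatrix of the stoichiometric matrix of N' formed by the rows of the new species has rank m. Then delta(N') = delta(N). -/
open Submodule

/-- Extend a complex on the old species by zeros on the `k` new species. -/
def ext {s k : ℕ} (C : Cplx s) : Cplx (s + k) := Fin.append C 0

/-- Projection onto the coordinates of the `k` new species. -/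
def projNew {s k : ℕ} (v : Fin (s + k) → ℝ) : Fin k → ℝ := fun j => v (Fin.natAdd s j)

/-
Add the new pairs one at a time. It suffices that a reversible pair `C ⇄ D` whose reaction vector
`D - C` is not yet in the stoichiometric subspace leaves the deficiency unchanged: the rank goes up
by one, and `C`, `D` lie in different linkage classes (otherwise `D - C` would be a sum of reaction
vectors along a path), so counting classes over all complexes of the larger network, where absent
complexes form singleton classes, the pair merges two classes and `c - ℓ` also goes up by one.
The new-species coordinates of every old reaction vector vanish, so the rank condition makes each
new `D j - C j` independent of all reaction vectors present before it.
-/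
namespace Network

variable {n : ℕ} {M : Network n} {X Y : Cplx n}

lemma linked_symm_s11 (h : M.linked X Y) : M.linked Y X :=
  Relation.ReflTransGen.mono (fun _ _ hst => Or.symm hst) _ _ (Relation.reflTransGen_swap.mpr h)

lemma mem_complexes_of_step_s11 (h : M.step X Y) : X ∈ M.complexes ∧ Y ∈ M.complexes := by
  simp only [complexes, Finset.mem_union, Finset.mem_image]
  rcases h with h | h
  · exact ⟨.inl ⟨_, h, rfl⟩, .inr ⟨_, h, rfl⟩⟩
  · exact ⟨.inr ⟨_, h, rfl⟩, .inl ⟨_, h, rfl⟩⟩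

lemma eq_of_linked_of_notMem_complexes (h : M.linked X Y) (hY : Y ∉ M.complexes) : X = Y := by
  obtain rfl | ⟨_, -, hstep⟩ := h.cases_tail
  · rfl
  · exact absurd (mem_complexes_of_step_s11 hstep).2 hY

lemma linkageClass_eq_singleton (hX : X ∉ M.complexes) : M.linkageClass X = {X} :=
  Set.ext fun _ => ⟨fun h => eq_of_linked_of_notMem_complexes (linked_symm_s11 h) hX,
    fun h => h ▸ Relation.ReflTransGen.refl⟩

lemma mem_linkageClass_self : X ∈ M.linkageClass X := Relation.ReflTransGen.refl

lemma linkageClass_eq_linkageClass_iff : M.linkageClass X = M.linkageClass Y ↔ M.linked X Y := by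
  refine ⟨fun h => show Y ∈ M.linkageClass X from h ▸ mem_linkageClass_self,
    fun h => Set.ext fun Z => ?_⟩
  exact ⟨fun hZ => (linked_symm_s11 h).trans hZ, fun hZ => h.trans hZ⟩

lemma sub_mem_stoichSubspace_of_linked_s11 (h : M.linked X Y) :
    toR Y - toR X ∈ M.stoichSubspace := by
  induction h with
  | refl => simp
  | @tail Y Z _ hYZ ih =>
    have hstep : toR Z - toR Y ∈ M.stoichSubspace := by
      rcases hYZ with hr | hr
      · exact subset_span ⟨_, hr, rfl⟩
      · rw [← neg_sub]
        exact neg_mem (subset_span ⟨_, hr, rfl⟩)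
    simpa using add_mem ih hstep

lemma stoichSubspace_eq_span_image :
    M.stoichSubspace =
      span ℝ ((fun r : Cplx n × Cplx n => toR r.2 - toR r.1) '' M.reactions) := by
  unfold stoichSubspace
  congr 1
  ext
  simp only [Set.mem_ofPred_eq, Set.mem_image, Finset.mem_coe, eq_comm]

lemma numLinkage_eq_ncard_image_s11 : M.numLinkage = (M.linkageClass '' M.complexes).ncard := by
  simp only [numLinkage, Set.image, Finset.mem_coe, eq_comm]

lemma numComplexes_sub_numLinkage_eq_s11 {V : Finset (Cplx n)} (hV : M.complexes ⊆ V) :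
    (M.numComplexes : ℤ) - M.numLinkage = V.card - (M.linkageClass '' V).ncard := by
  classical
  have hsplit : M.linkageClass '' V =
      M.linkageClass '' M.complexes ∪ (fun X => {X}) '' ↑(V \ M.complexes) := by
    rw [← Set.image_congr fun X hX => linkageClass_eq_singleton (Finset.mem_sdiff.mp hX).2,
      ← Set.image_union, ← Finset.coe_union, Finset.union_sdiff_of_subset hV]
  have hdisj :
      Disjoint (M.linkageClass '' M.complexes) ((fun X => {X}) '' ↑(V \ M.complexes)) := by
    rw [Set.disjoint_left]
    rintro _ ⟨X, hX, rfl⟩ ⟨Y, hY, hYX⟩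
    have hXY : M.linked X Y := show Y ∈ M.linkageClass X from hYX ▸ rfl
    exact (Finset.mem_sdiff.mp hY).2 (eq_of_linked_of_notMem_complexes hXY
      (Finset.mem_sdiff.mp hY).2 ▸ hX)
  rw [hsplit, Set.ncard_union_eq hdisj, Set.InjOn.ncard_image Set.singleton_injective.injOn,
    Set.ncard_coe_finset, ← numLinkage_eq_ncard_image_s11, Finset.card_sdiff_of_subset hV,
    numComplexes]
  have := Finset.card_le_card hV
  omega

section AddPair

variable {M M' : Network n} {C D : Cplx n}

lemma complexes_eq_union_pair (hM' : M'.reactions = M.reactions ∪ {(C, D), (D, C)}) :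
    M'.complexes = M.complexes ∪ {C, D} := by
  ext X
  simp only [complexes, hM', Finset.image_union, Finset.image_insert, Finset.image_singleton,
    Finset.mem_union, Finset.mem_insert, Finset.mem_singleton]
  tauto

lemma step_iff_of_eq_union_pair (hM' : M'.reactions = M.reactions ∪ {(C, D), (D, C)}) :
    M'.step X Y ↔ M.step X Y ∨ (X = C ∧ Y = D) ∨ (X = D ∧ Y = C) := by
  simp only [step, hM', Finset.mem_union, Finset.mem_insert, Finset.mem_singleton,
    Prod.mk.injEq]
  tauto

lemma linked_iff_of_eq_union_pair (hM' : M'.reactions = M.reactions ∪ {(C, D), (D, C)}) :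
    M'.linked X Y ↔
      M.linked X Y ∨ (M.linked X C ∧ M.linked D Y) ∨ (M.linked X D ∧ M.linked C Y) := by
  have hmono : ∀ {A B}, M.linked A B → M'.linked A B := fun h =>
    Relation.ReflTransGen.mono (fun _ _ hst => (step_iff_of_eq_union_pair hM').mpr (.inl hst)) _ _ h
  have hCD : M'.linked C D := .single ((step_iff_of_eq_union_pair hM').mpr (by tauto))
  have hDC : M'.linked D C := .single ((step_iff_of_eq_union_pair hM').mpr (by tauto))
  refine ⟨fun h => ?_, ?_⟩
  · induction h with
    | refl => exact .inl .refl
    | tail _ hst ih =>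
      rcases (step_iff_of_eq_union_pair hM').mp hst with hst | ⟨rfl, rfl⟩ | ⟨rfl, rfl⟩ <;>
      rcases ih with h | ⟨h₁, h₂⟩ | ⟨h₁, h₂⟩
      exacts [.inl (h.tail hst), .inr (.inl ⟨h₁, h₂.tail hst⟩), .inr (.inr ⟨h₁, h₂.tail hst⟩),
        .inr (.inl ⟨h, .refl⟩), .inr (.inl ⟨h₁, .refl⟩), .inl h₁,
        .inr (.inr ⟨h, .refl⟩), .inl h₁, .inr (.inr ⟨h₁, .refl⟩)]
  · rintro (h | ⟨h₁, h₂⟩ | ⟨h₁, h₂⟩)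
    exacts [hmono h, ((hmono h₁).trans hCD).trans (hmono h₂),
      ((hmono h₁).trans hDC).trans (hmono h₂)]

lemma linkageClass_eq_of_not_linked (hM' : M'.reactions = M.reactions ∪ {(C, D), (D, C)})
    (hC : ¬M.linked X C) (hD : ¬M.linked X D) : M'.linkageClass X = M.linkageClass X := by
  ext Y
  simp only [linkageClass, Set.mem_ofPred_eq, linked_iff_of_eq_union_pair hM']
  tauto

lemma linkageClass_eq_union_of_linked (hM' : M'.reactions = M.reactions ∪ {(C, D), (D, C)})
    (hX : M.linked X C ∨ M.linked X D) :
    M'.linkageClass X = M.linkageClass C ∪ M.linkageClass D := by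
  ext Y
  simp only [linkageClass, Set.mem_ofPred_eq, Set.mem_union, linked_iff_of_eq_union_pair hM']
  rcases hX with hX | hX
  · constructor
    · rintro (h | ⟨-, h⟩ | ⟨-, h⟩)
      exacts [.inl ((linked_symm_s11 hX).trans h), .inr h, .inl h]
    · rintro (h | h)
      exacts [.inl (hX.trans h), .inr (.inl ⟨hX, h⟩)]
  · constructor
    · rintro (h | ⟨-, h⟩ | ⟨-, h⟩)
      exacts [.inr ((linked_symm_s11 hX).trans h), .inr h, .inl h]
    · rintro (h | h)
      exacts [.inr (.inr ⟨hX, h⟩), .inl (hX.trans h)]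

lemma ncard_image_linkageClass_eq_add_one
    (hM' : M'.reactions = M.reactions ∪ {(C, D), (D, C)}) (hCD : ¬M.linked C D)
    {V : Finset (Cplx n)} (hC : C ∈ V) (hD : D ∈ V) :
    (M.linkageClass '' V).ncard = (M'.linkageClass '' V).ncard + 1 := by
  set P : Cplx n → Prop := fun X => M.linked X C ∨ M.linked X D
  set A := M.linkageClass '' {X ∈ ↑V | ¬P X}
  have hV : (V : Set (Cplx n)) = {X ∈ ↑V | ¬P X} ∪ {X ∈ ↑V | P X} := by
    ext X
    simp only [Set.mem_union, Set.mem_ofPred_eq, Finset.mem_coe]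
    tauto
  have hP : {X ∈ ↑V | P X}.Nonempty := ⟨C, hC, .inl .refl⟩
  have hA : ∀ S ∈ A, C ∉ S ∧ D ∉ S := by
    rintro _ ⟨X, ⟨-, hX⟩, rfl⟩
    exact not_or.mp hX
  have himage : M.linkageClass '' V = A ∪ {M.linkageClass C, M.linkageClass D} := by
    rw [hV, Set.image_union]
    congr 1
    ext S
    constructor
    · rintro ⟨X, ⟨-, hX | hX⟩, rfl⟩
      exacts [.inl (linkageClass_eq_linkageClass_iff.mpr hX),
        .inr (linkageClass_eq_linkageClass_iff.mpr hX)]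
    · rintro (rfl | rfl)
      exacts [⟨C, ⟨hC, .inl .refl⟩, rfl⟩, ⟨D, ⟨hD, .inr .refl⟩, rfl⟩]
  have himage' : M'.linkageClass '' V = A ∪ {M.linkageClass C ∪ M.linkageClass D} := by
    rw [hV, Set.image_union, ← hP.image_const]
    congr 1
    · exact Set.image_congr fun X hX =>
        linkageClass_eq_of_not_linked hM' (not_or.mp hX.2).1 (not_or.mp hX.2).2
    · exact Set.image_congr fun X hX => linkageClass_eq_union_of_linked hM' hX.2
  have hne : M.linkageClass C ≠ M.linkageClass D := fun h =>
    hCD (linkageClass_eq_linkageClass_iff.mp h)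
  rw [himage, himage', Set.ncard_union_eq, Set.ncard_union_eq, Set.ncard_pair hne,
    Set.ncard_singleton]
  · exact Set.disjoint_singleton_right.mpr fun h => (hA _ h).1 (.inl mem_linkageClass_self)
  · refine Set.disjoint_left.mpr fun S hS h => ?_
    obtain rfl | rfl := h
    exacts [(hA _ hS).1 mem_linkageClass_self, (hA _ hS).2 mem_linkageClass_self]

lemma numComplexes_sub_numLinkage_eq_add_one
    (hM' : M'.reactions = M.reactions ∪ {(C, D), (D, C)}) (hCD : ¬M.linked C D) :
    (M'.numComplexes : ℤ) - M'.numLinkage = M.numComplexes - M.numLinkage + 1 := by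
  have hcx := complexes_eq_union_pair hM'
  have hsub : M.complexes ⊆ M'.complexes := hcx ▸ Finset.subset_union_left
  have hC : C ∈ M'.complexes := by simp [hcx]
  have hD : D ∈ M'.complexes := by simp [hcx]
  rw [numComplexes_sub_numLinkage_eq_s11 hsub, numComplexes_sub_numLinkage_eq_s11 subset_rfl,
    ncard_image_linkageClass_eq_add_one hM' hCD hC hD]
  push_cast
  ring

lemma stoichSubspace_eq_sup_span_singleton
    (hM' : M'.reactions = M.reactions ∪ {(C, D), (D, C)}) :
    M'.stoichSubspace = M.stoichSubspace ⊔ span ℝ {toR D - toR C} := by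
  have hneg : toR C - toR D ∈ span ℝ {toR D - toR C} := by
    rw [← neg_sub (toR D)]
    exact neg_mem (Submodule.mem_span_singleton_self _)
  rw [stoichSubspace_eq_span_image, stoichSubspace_eq_span_image, hM', Finset.coe_union,
    Set.image_union, span_union, Finset.coe_pair, Set.image_pair, Set.pair_comm,
    span_insert_eq_span hneg]

theorem deficiency_eq_of_eq_union_pair (hM' : M'.reactions = M.reactions ∪ {(C, D), (D, C)})
    (hv : toR D - toR C ∉ M.stoichSubspace) : M'.deficiency = M.deficiency := by
  have hrank : M'.rank = M.rank + 1 := by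
    rw [rank, rank, stoichSubspace_eq_sup_span_singleton hM',
      Submodule.finrank_sup_span_singleton hv]
  have hcl := numComplexes_sub_numLinkage_eq_add_one hM' fun h =>
    hv (sub_mem_stoichSubspace_of_linked_s11 h)
  rw [deficiency, deficiency, hrank]
  push_cast
  linarith

end AddPair

section Relabel

variable {t : ℕ} {N : Network n} {M : Network t} {e : Cplx n → Cplx t}

lemma complexes_eq_image (hM : M.reactions = N.reactions.image fun r => (e r.1, e r.2)) :
    M.complexes = N.complexes.image e := by
  simp only [complexes, hM, Finset.image_union, Finset.image_image]
  rfl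

lemma linked_apply_of_eq_image (hM : M.reactions = N.reactions.image fun r => (e r.1, e r.2))
    {A B : Cplx n} (h : N.linked A B) : M.linked (e A) (e B) := by
  refine Relation.ReflTransGen.lift e (fun a b hst => ?_) _ _ h
  rw [Function.onFun, step, hM]
  exact hst.imp (Finset.mem_image_of_mem _) (Finset.mem_image_of_mem _)

lemma exists_linked_eq_of_linked_apply (he : e.Injective)
    (hM : M.reactions = N.reactions.image fun r => (e r.1, e r.2))
    {A : Cplx n} {Y : Cplx t} (h : M.linked (e A) Y) : ∃ B, N.linked A B ∧ e B = Y := by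
  induction h with
  | refl => exact ⟨A, .refl, rfl⟩
  | tail _ hst ih =>
    obtain ⟨B, hAB, rfl⟩ := ih
    rw [step, hM] at hst
    rcases hst with hr | hr <;> obtain ⟨⟨B₁, B₂⟩, hr, hBB⟩ := Finset.mem_image.mp hr <;>
      simp only [Prod.mk.injEq] at hBB
    · exact ⟨B₂, hAB.tail (.inl (he hBB.1 ▸ hr)), hBB.2⟩
    · exact ⟨B₁, hAB.tail (.inr (he hBB.2 ▸ hr)), hBB.1⟩

lemma linkageClass_apply_of_eq_image (he : e.Injective)
    (hM : M.reactions = N.reactions.image fun r => (e r.1, e r.2)) (A : Cplx n) :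
    M.linkageClass (e A) = e '' N.linkageClass A := by
  ext Y
  exact ⟨exists_linked_eq_of_linked_apply he hM,
    fun ⟨_, hB, hY⟩ => hY ▸ linked_apply_of_eq_image hM hB⟩

lemma numComplexes_eq_of_eq_image (he : e.Injective)
    (hM : M.reactions = N.reactions.image fun r => (e r.1, e r.2)) :
    M.numComplexes = N.numComplexes := by
  rw [numComplexes, numComplexes, complexes_eq_image hM, Finset.card_image_of_injective _ he]

lemma numLinkage_eq_of_eq_image (he : e.Injective)
    (hM : M.reactions = N.reactions.image fun r => (e r.1, e r.2)) :
    M.numLinkage = N.numLinkage := by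
  rw [numLinkage_eq_ncard_image_s11, numLinkage_eq_ncard_image_s11, complexes_eq_image hM,
    Finset.coe_image, Set.image_image,
    Set.image_congr fun A _ => linkageClass_apply_of_eq_image he hM A, ← Set.image_image,
    Set.ncard_image_of_injective _ (Set.image_injective.mpr he)]

lemma rank_eq_of_eq_image (hM : M.reactions = N.reactions.image fun r => (e r.1, e r.2))
    (L : (Fin n → ℝ) →ₗ[ℝ] Fin t → ℝ) (hL : Function.Injective L)
    (heL : ∀ A, toR (e A) = L (toR A)) : M.rank = N.rank := by
  have hmap : M.stoichSubspace = N.stoichSubspace.map L := by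
    rw [stoichSubspace_eq_span_image, stoichSubspace_eq_span_image, map_span, hM,
      Finset.coe_image, Set.image_image, Set.image_image]
    simp only [heL, map_sub]
  rw [rank, rank, hmap]
  exact (equivMapOfInjective L hL _).finrank_eq.symm

theorem deficiency_eq_of_eq_image (he : e.Injective)
    (hM : M.reactions = N.reactions.image fun r => (e r.1, e r.2))
    (L : (Fin n → ℝ) →ₗ[ℝ] Fin t → ℝ) (hL : Function.Injective L)
    (heL : ∀ A, toR (e A) = L (toR A)) : M.deficiency = N.deficiency := by
  rw [deficiency, deficiency, numComplexes_eq_of_eq_image he hM,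
    numLinkage_eq_of_eq_image he hM, rank_eq_of_eq_image hM L hL heL]

end Relabel

end Network

section E5

variable {s k m : ℕ}

lemma ext_castAdd (A : Cplx s) (j : Fin s) : ext (k := k) A (Fin.castAdd k j) = A j :=
  Fin.append_left _ _ _

lemma ext_natAdd (A : Cplx s) (j : Fin k) : ext (k := k) A (Fin.natAdd s j) = 0 :=
  Fin.append_right _ _ _

lemma ext_injective : Function.Injective (ext (s := s) (k := k)) := fun A B h =>
  funext fun j => by simpa [ext_castAdd] using congrFun h (Fin.castAdd k j)

lemma toR_ext (A : Cplx s) :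
    toR (ext (k := k) A) = Function.ExtendByZero.linearMap ℝ (Fin.castAdd k) (toR A) := by
  funext x
  induction x using Fin.addCases with
  | left j => simp [toR, ext_castAdd, (Fin.castAdd_injective s k).extend_apply]
  | right j =>
    have hj : ¬∃ i, Fin.castAdd k i = Fin.natAdd s j := fun ⟨i, hi⟩ => by
      have := congrArg Fin.val hi
      simp only [Fin.val_castAdd, Fin.val_natAdd] at this
      omega
    rw [Function.ExtendByZero.linearMap_apply, Function.extend_apply' _ _ _ hj]
    simp [toR, ext_natAdd]

lemma projNew_toR_ext (A : Cplx s) : projNew (toR (ext (k := k) A)) = 0 := by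
  funext j
  simp [projNew, toR, ext_natAdd]

variable (N : Network s) (C D : Fin m → Cplx (s + k))

def e5Reactions (S : Finset (Fin m)) : Finset (Cplx (s + k) × Cplx (s + k)) :=
  (N.reactions.image fun r => (ext r.1, ext r.2)) ∪ (S.image fun j => (C j, D j))
    ∪ (S.image fun j => (D j, C j))

lemma e5Reactions_empty :
    e5Reactions N C D ∅ = N.reactions.image fun r => (ext r.1, ext r.2) := by
  simp [e5Reactions]

lemma e5Reactions_insert (j : Fin m) (S : Finset (Fin m)) :
    e5Reactions N C D (insert j S) = e5Reactions N C D S ∪ {(C j, D j), (D j, C j)} := by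
  ext r
  simp only [e5Reactions, Finset.image_insert, Finset.mem_union, Finset.mem_insert,
    Finset.mem_singleton]
  tauto

variable {N C D}

lemma stoichSubspace_le_comap_projNew {M : Network (s + k)} {S : Finset (Fin m)}
    (hM : M.reactions = e5Reactions N C D S) :
    M.stoichSubspace ≤ (span ℝ ((fun j => projNew (toR (D j) - toR (C j))) '' S)).comap
      (LinearMap.funLeft ℝ ℝ (Fin.natAdd s)) := by
  rw [Network.stoichSubspace_eq_span_image, span_le]
  rintro _ ⟨r, hr, rfl⟩
  simp only [hM, e5Reactions, Finset.coe_union, Finset.coe_image, Set.mem_union,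
    Set.mem_image] at hr
  rcases hr with (⟨A, -, rfl⟩ | ⟨j, hj, rfl⟩) | ⟨j, hj, rfl⟩
  · rw [SetLike.mem_coe, mem_comap]
    show projNew (toR (ext A.2)) - projNew (toR (ext A.1)) ∈ span ℝ _
    rw [projNew_toR_ext, projNew_toR_ext, sub_zero]
    exact zero_mem _
  · exact subset_span ⟨j, hj, rfl⟩
  · rw [SetLike.mem_coe, mem_comap]
    show projNew (toR (C j) - toR (D j)) ∈ span ℝ _
    rw [← neg_sub (toR (D j))]
    exact neg_mem (subset_span ⟨j, hj, rfl⟩)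

lemma sub_notMem_stoichSubspace
    (hindep : LinearIndependent ℝ fun j => projNew (toR (D j) - toR (C j)))
    {M : Network (s + k)} {S : Finset (Fin m)} (hM : M.reactions = e5Reactions N C D S)
    {j : Fin m} (hj : j ∉ S) : toR (D j) - toR (C j) ∉ M.stoichSubspace := by
  intro h
  have hproj : projNew (toR (D j) - toR (C j)) ∈
      span ℝ ((fun j => projNew (toR (D j) - toR (C j))) '' S) :=
    mem_comap.mp (stoichSubspace_le_comap_projNew hM h)
  exact hindep.notMem_span_image (Finset.mem_coe.not.mpr hj) hproj

theorem deficiency_eq_of_eq_e5Reactions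
    (hindep : LinearIndependent ℝ fun j => projNew (toR (D j) - toR (C j)))
    (S : Finset (Fin m)) {M : Network (s + k)} (hM : M.reactions = e5Reactions N C D S) :
    M.deficiency = N.deficiency := by
  induction S using Finset.induction_on generalizing M with
  | empty =>
    have hL : Function.Injective (Function.ExtendByZero.linearMap ℝ (Fin.castAdd (n := s) k)) :=
      Function.extend_injective (Fin.castAdd_injective s k) 0
    exact Network.deficiency_eq_of_eq_image ext_injective (hM.trans (e5Reactions_empty N C D)) _ hL
      toR_ext
  | @insert j S hj ih =>
    rw [e5Reactions_insert] at hM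
    let M₀ : Network (s + k) :=
      ⟨e5Reactions N C D S, fun r hr => M.ne r (hM ▸ Finset.mem_union_left _ hr)⟩
    rw [Network.deficiency_eq_of_eq_union_pair (M := M₀) hM
      (sub_notMem_stoichSubspace hindep rfl hj)]
    exact ih rfl

end E5

theorem stmt11_general {s m i : ℕ} (N : Network s) (N' : Network (s + (m + i)))
    (C D : Fin m → Cplx (s + (m + i)))
    (h : N'.reactions = (N.reactions.image fun r => (ext r.1, ext r.2))
        ∪ (Finset.univ.image fun j => (C j, D j))
        ∪ (Finset.univ.image fun j => (D j, C j)))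
    (hrank : Module.finrank ℝ (Submodule.span ℝ
        (Set.range fun j => projNew (toR (D j) - toR (C j)))) = m) :
    N'.deficiency = N.deficiency := by
  have hindep : LinearIndependent ℝ fun j => projNew (toR (D j) - toR (C j)) := by
    rw [linearIndependent_iff_card_eq_finrank_span, Fintype.card_fin]
    exact hrank.symm
  exact deficiency_eq_of_eq_e5Reactions hindep Finset.univ h

theorem stmt11 {s m i : ℕ} (hm : 0 < m) (N : Network s) (N' : Network (s + (m + i)))
    (C D : Fin m → Cplx (s + (m + i)))
    (h : N'.reactions = (N.reactions.image fun r => (ext r.1, ext r.2))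
        ∪ (Finset.univ.image fun j => (C j, D j))
        ∪ (Finset.univ.image fun j => (D j, C j)))
    (hrank : Module.finrank ℝ (Submodule.span ℝ
        (Set.range fun j => projNew (toR (D j) - toR (C j)))) = m) :
    N'.deficiency = N.deficiency :=
  stmt11_general N N' C D h hrank
end
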